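/- arXiv:1510.00839 — 2 statements merged into one kernel-verified Lean document; each statement's English description precedes it below -/
import Mathlib

section
/- Let t ≤ k ≤ d and Q ∈ ℕ, and let X be a d-complex which is Q-bounded at dimension k, i.e. every k-face of X is contained in at most Q faces of X(d). Then for every A ⊆ X(t): (1/(Q · binom(d−t, k−t))) · ‖A‖_X ≤ ‖A‖_{X^{(k)}} ≤ Q · binom(d+1, k+1) · ‖A‖_X, where ‖·‖_X is the norm of the d-complex X and ‖·‖_{X^{(k)}} is the norm of the k-complex X^{(k)}. -/
open Finset
open scoped symmDiff

noncomputable section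

namespace HDExpansion

/-- The faces of cardinality `m` (i.e. of dimension `m - 1`) of a complex `X`. -/
def facesC (X : Finset (Finset ℕ)) (m : ℕ) : Finset (Finset ℕ) :=
  X.filter fun σ => σ.card = m

/-- `X` is a finite, pure, `d`-dimensional abstract simplicial complex:
it is nonempty, closed under subsets, and every face is contained in a face
of cardinality `d + 1`. -/
def IsComplex (X : Finset (Finset ℕ)) (d : ℕ) : Prop :=
  X.Nonempty ∧ (∀ σ ∈ X, ∀ τ ⊆ σ, τ ∈ X) ∧
    ∀ σ ∈ X, ∃ F ∈ X, σ ⊆ F ∧ F.card = d + 1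

/-- The weight of a face `σ` in the `d`-complex `X`:
`w(σ) = |{F ∈ X(d) : σ ⊆ F}| / (binom(d+1,|σ|)·|X(d)|)`. -/
def weightC (X : Finset (Finset ℕ)) (d : ℕ) (σ : Finset ℕ) : ℝ :=
  (((facesC X (d + 1)).filter fun F => σ ⊆ F).card : ℝ) /
    (((d + 1).choose σ.card * (facesC X (d + 1)).card : ℕ) : ℝ)

/-- The norm of a cochain: `‖A‖ = Σ_{σ∈A} w(σ)`. -/
def normC (X : Finset (Finset ℕ)) (d : ℕ) (A : Finset (Finset ℕ)) : ℝ :=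
  ∑ σ ∈ A, weightC X d σ

/-- The coboundary map, sending a cochain of faces of cardinality `m`
(dimension `m-1`) to the set of faces of cardinality `m+1` containing an odd
number of its elements. -/
def cobC (X : Finset (Finset ℕ)) (m : ℕ) (A : Finset (Finset ℕ)) : Finset (Finset ℕ) :=
  (facesC X (m + 1)).filter fun τ => (A.filter fun σ => σ ⊆ τ).card % 2 = 1

/-- `A` (a cochain of faces of cardinality `m`, i.e. dimension `m-1`) is a
coboundary: `A ∈ B^{m-1}`. -/
def IsCobound (X : Finset (Finset ℕ)) (m : ℕ) (A : Finset (Finset ℕ)) : Prop :=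
  ∃ γ ⊆ facesC X (m - 1), cobC X (m - 1) γ = A

/-- `A` (a cochain of faces of cardinality `m`, i.e. dimension `m-1`) is a
cocycle: `A ∈ Z^{m-1}`. -/
def IsCocycle (X : Finset (Finset ℕ)) (m : ℕ) (A : Finset (Finset ℕ)) : Prop :=
  A ⊆ facesC X m ∧ cobC X m A = ∅

/-- `min_{b ∈ B^{m-1}} ‖A + b‖` (cochain sum is symmetric difference `∆`). -/
def distB (X : Finset (Finset ℕ)) (d m : ℕ) (A : Finset (Finset ℕ)) : ℝ :=
  sInf {r : ℝ | ∃ b, IsCobound X m b ∧ r = normC X d (A ∆ b)}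

/-- `min_{z ∈ Z^{m-1}} ‖A + z‖` (cochain sum is symmetric difference `∆`). -/
def distZ (X : Finset (Finset ℕ)) (d m : ℕ) (A : Finset (Finset ℕ)) : ℝ :=
  sInf {r : ℝ | ∃ z, IsCocycle X m z ∧ r = normC X d (A ∆ z)}

/-- The link `X_σ = {τ : σ ∩ τ = ∅, σ ∪ τ ∈ X}`. -/
def link (X : Finset (Finset ℕ)) (σ : Finset ℕ) : Finset (Finset ℕ) :=
  (X.filter fun ρ => σ ⊆ ρ).image fun ρ => ρ \ σ

/-- The localization `I_σ(A) = {τ ∈ X_σ : τ ∪ σ ∈ A}`. -/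
def locF (σ : Finset ℕ) (A : Finset (Finset ℕ)) : Finset (Finset ℕ) :=
  (A.filter fun ρ => σ ⊆ ρ).image fun ρ => ρ \ σ

/-- The lifting `I^σ(A) = {τ ∪ σ : τ ∈ A}`. -/
def liftF (σ : Finset ℕ) (A : Finset (Finset ℕ)) : Finset (Finset ℕ) :=
  A.image fun τ => τ ∪ σ

/-- A cochain of faces of cardinality `m` is minimal if `‖A‖ ≤ ‖A + b‖` for
every coboundary `b`. -/
def IsMinimal (Y : Finset (Finset ℕ)) (dY m : ℕ) (A : Finset (Finset ℕ)) : Prop :=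
  ∀ b, IsCobound Y m b → normC Y dY A ≤ normC Y dY (A ∆ b)

/-- A cochain of faces of cardinality `m` is locally minimal if all its
localizations to links of nonempty faces are minimal. -/
def IsLocallyMinimal (X : Finset (Finset ℕ)) (d m : ℕ) (A : Finset (Finset ℕ)) : Prop :=
  ∀ σ ∈ X, σ ≠ ∅ → IsMinimal (link X σ) (d - σ.card) (m - σ.card) (locF σ A)

/-- `Y` (a `dY`-complex) is a `β`-coboundary expander: for every dimension
`k = m - 1` with `0 ≤ k ≤ dY - 1` and every `k`-cochain `A ∉ B^k`,
`‖δA‖ ≥ β · min_{b ∈ B^k} ‖A+b‖`. -/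
def CobExpander (Y : Finset (Finset ℕ)) (dY : ℕ) (β : ℝ) : Prop :=
  ∀ m : ℕ, 1 ≤ m → m ≤ dY → ∀ A ⊆ facesC Y m, ¬ IsCobound Y m A →
    β * distB Y dY m A ≤ normC Y dY (cobC Y m A)

/-- `E(A,A)`: the edges of `Y` with both vertices in the vertex set `A`
(vertices are identified with singleton faces). -/
def edgesIn (Y : Finset (Finset ℕ)) (A : Finset (Finset ℕ)) : Finset (Finset ℕ) :=
  (facesC Y 2).filter fun e => ∀ v ∈ e, ({v} : Finset ℕ) ∈ A

/-- `Y` (a `dY`-complex) is an `α`-skeleton expander. -/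
def SkelExpander (Y : Finset (Finset ℕ)) (dY : ℕ) (α : ℝ) : Prop :=
  ∀ A ⊆ facesC Y 1, normC Y dY (edgesIn Y A) ≤ 4 * (normC Y dY A ^ 2 + α * normC Y dY A)

/-- The `m`-skeleton of a complex (all faces of dimension at most `m`). -/
def skeleton (X : Finset (Finset ℕ)) (m : ℕ) : Finset (Finset ℕ) :=
  X.filter fun σ => σ.card ≤ m + 1


/-!
Fix a `t`-face `σ`, let `a` be the number of `d`-faces and `b` the number of `k`-faces containing
it. Counting the pairs `σ ⊆ G ⊆ F` with `G ∈ X(k)`, `F ∈ X(d)` gives `a · C(d-t, k-t)`, and each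
`G` lies in between `1` (purity) and `Q` (boundedness) faces `F`, so
`b ≤ a · C(d-t, k-t) ≤ Q · b`. The case `σ = ∅` gives `|X(k)| ≤ |X(d)| · C(d+1, k+1) ≤ Q · |X(k)|`.
Combined with `C(d+1, t+1) · C(d-t, k-t) = C(d+1, k+1) · C(k+1, t+1)`, the two weights of `σ`
are within a factor `Q` of each other, which is sharper than the claim.
-/

def cofaceCount (X : Finset (Finset ℕ)) (n : ℕ) (σ : Finset ℕ) : ℕ :=
  ((facesC X n).filter fun F => σ ⊆ F).card

section Counting

variable {X : Finset (Finset ℕ)} {m n : ℕ} {σ : Finset ℕ}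

theorem cofaceCount_empty (X : Finset (Finset ℕ)) (n : ℕ) :
    cofaceCount X n ∅ = (facesC X n).card := by
  simp [cofaceCount]

theorem card_facesC_between (hdown : ∀ τ ∈ X, ∀ ρ ⊆ τ, ρ ∈ X) {F : Finset ℕ} (hF : F ∈ X)
    (hσF : σ ⊆ F) (hσm : σ.card ≤ m) :
    (((facesC X m).filter fun G => σ ⊆ G).filter fun G => G ⊆ F).card =
      (F.card - σ.card).choose (m - σ.card) := by
  rw [← card_sdiff_of_subset hσF, ← card_powersetCard]
  refine card_nbij' (· \ σ) (· ∪ σ) ?_ ?_ ?_ ?_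
  · intro G hG
    simp only [mem_coe, facesC, mem_filter] at hG
    obtain ⟨⟨⟨-, hGm⟩, hσG⟩, hGF⟩ := hG
    simp only [mem_coe, mem_powersetCard]
    exact ⟨sdiff_subset_sdiff hGF le_rfl, by rw [card_sdiff_of_subset hσG, hGm]⟩
  · intro τ hτ
    simp only [mem_coe, mem_powersetCard] at hτ
    have hdisj : Disjoint τ σ := sdiff_disjoint.mono_left hτ.1
    have hτσF : τ ∪ σ ⊆ F := union_subset (hτ.1.trans sdiff_subset) hσF
    simp only [mem_coe, facesC, mem_filter]
    exact ⟨⟨⟨hdown F hF _ hτσF, by rw [card_union_of_disjoint hdisj, hτ.2]; omega⟩,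
      subset_union_right⟩, hτσF⟩
  · intro G hG
    simp only [mem_coe, mem_filter] at hG
    exact sdiff_union_of_subset hG.1.2
  · intro τ hτ
    simp only [mem_coe, mem_powersetCard] at hτ
    simp only [union_sdiff_right, sdiff_eq_self_of_disjoint (sdiff_disjoint.mono_left hτ.1)]

theorem sum_cofaceCount_eq (hdown : ∀ τ ∈ X, ∀ ρ ⊆ τ, ρ ∈ X) (hσm : σ.card ≤ m) :
    ∑ G ∈ (facesC X m).filter (fun G => σ ⊆ G), cofaceCount X n G =
      cofaceCount X n σ * (n - σ.card).choose (m - σ.card) := by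
  set S := (facesC X m).filter fun G => σ ⊆ G
  set T := (facesC X n).filter fun F => σ ⊆ F
  have hcof : ∀ G ∈ S, cofaceCount X n G = (T.bipartiteAbove (· ⊆ ·) G).card := by
    intro G hG
    have hσG : σ ⊆ G := (mem_filter.mp hG).2
    simp only [cofaceCount, bipartiteAbove, T, filter_filter]
    congr 1
    exact filter_congr fun F _ => ⟨fun hGF => ⟨hσG.trans hGF, hGF⟩, And.right⟩
  have hbetween : ∀ F ∈ T, (S.bipartiteBelow (· ⊆ ·) F).card =
      (n - σ.card).choose (m - σ.card) := by
    intro F hF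
    simp only [T, facesC, mem_filter] at hF
    rw [bipartiteBelow, card_facesC_between hdown hF.1.1 hF.2 hσm, hF.1.2]
  rw [sum_congr rfl hcof, sum_card_bipartiteAbove_eq_sum_card_bipartiteBelow,
    sum_congr rfl hbetween, sum_const, smul_eq_mul]
  rfl

theorem cofaceCount_le_mul_choose (hdown : ∀ τ ∈ X, ∀ ρ ⊆ τ, ρ ∈ X)
    (hpure : ∀ G ∈ X, ∃ F ∈ X, G ⊆ F ∧ F.card = n) (hσm : σ.card ≤ m) :
    cofaceCount X m σ ≤ cofaceCount X n σ * (n - σ.card).choose (m - σ.card) := by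
  rw [← sum_cofaceCount_eq hdown hσm, cofaceCount, card_eq_sum_ones]
  refine sum_le_sum fun G hG => ?_
  simp only [facesC, mem_filter] at hG
  obtain ⟨F, hFX, hGF, hFn⟩ := hpure G hG.1.1
  exact card_pos.mpr ⟨F, mem_filter.mpr ⟨mem_filter.mpr ⟨hFX, hFn⟩, hGF⟩⟩

theorem mul_choose_le_mul_cofaceCount (hdown : ∀ τ ∈ X, ∀ ρ ⊆ τ, ρ ∈ X) {Q : ℕ}
    (hQ : ∀ G ∈ facesC X m, cofaceCount X n G ≤ Q) (hσm : σ.card ≤ m) :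
    cofaceCount X n σ * (n - σ.card).choose (m - σ.card) ≤ Q * cofaceCount X m σ := by
  rw [← sum_cofaceCount_eq hdown hσm, mul_comm, cofaceCount, ← smul_eq_mul, ← sum_const]
  exact sum_le_sum fun G hG => hQ G (mem_filter.mp hG).1

end Counting

section Weights

variable {X : Finset (Finset ℕ)} {d t k Q : ℕ} {σ : Finset ℕ}

theorem card_facesC_pos (hX : IsComplex X d) {m : ℕ} (hm : m ≤ d + 1) :
    0 < (facesC X m).card := by
  obtain ⟨⟨σ₀, hσ₀⟩, hdown, hpure⟩ := hX
  obtain ⟨F, hFX, -, hFd⟩ := hpure σ₀ hσ₀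
  obtain ⟨G, hGF, hGm⟩ := exists_subset_card_eq (hFd ▸ hm : m ≤ F.card)
  exact card_pos.mpr ⟨G, mem_filter.mpr ⟨hdown F hFX G hGF, hGm⟩⟩

theorem facesC_skeleton (X : Finset (Finset ℕ)) (k : ℕ) :
    facesC (skeleton X k) (k + 1) = facesC X (k + 1) := by
  ext G
  simp only [facesC, skeleton, mem_filter]
  exact ⟨fun h => ⟨h.1.1, h.2⟩, fun h => ⟨⟨h.1, h.2.le⟩, h.2⟩⟩

theorem weightC_eq (X : Finset (Finset ℕ)) (d : ℕ) (σ : Finset ℕ) :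
    weightC X d σ = (cofaceCount X (d + 1) σ : ℝ) /
      (((d + 1).choose σ.card * (facesC X (d + 1)).card : ℕ) : ℝ) :=
  rfl

theorem weightC_skeleton (X : Finset (Finset ℕ)) (k : ℕ) (σ : Finset ℕ) :
    weightC (skeleton X k) k σ = (cofaceCount X (k + 1) σ : ℝ) /
      (((k + 1).choose σ.card * (facesC X (k + 1)).card : ℕ) : ℝ) := by
  rw [weightC_eq, cofaceCount, cofaceCount, facesC_skeleton]

theorem choose_mul_choose_sub (htk : t ≤ k) :
    (d + 1).choose (t + 1) * (d - t).choose (k - t) =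
      (d + 1).choose (k + 1) * (k + 1).choose (t + 1) := by
  simpa using (Nat.choose_mul (n := d + 1) (k := k + 1) (s := t + 1) (by omega)).symm

theorem weightC_le_mul_weightC_skeleton (htk : t ≤ k) (hkd : k ≤ d) (hX : IsComplex X d)
    (hQ : ∀ G ∈ facesC X (k + 1), cofaceCount X (d + 1) G ≤ Q)
    (hσ : σ ∈ facesC X (t + 1)) :
    weightC X d σ ≤ Q * weightC (skeleton X k) k σ := by
  have hD := card_facesC_pos hX le_rfl
  have hK := card_facesC_pos hX (by omega : k + 1 ≤ d + 1)
  obtain ⟨-, hdown, hpure⟩ := hX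
  have hσt : σ.card = t + 1 := (mem_filter.mp hσ).2
  have hglobal :
      (facesC X (k + 1)).card ≤ (facesC X (d + 1)).card * (d + 1).choose (k + 1) := by
    simpa [cofaceCount_empty] using
      cofaceCount_le_mul_choose (σ := ∅) (m := k + 1) hdown hpure (by simp)
  have hlocal :
      cofaceCount X (d + 1) σ * (d - t).choose (k - t) ≤ Q * cofaceCount X (k + 1) σ := by
    simpa [hσt] using mul_choose_le_mul_cofaceCount hdown hQ (by omega : σ.card ≤ k + 1)
  have := Nat.choose_pos (by omega : t + 1 ≤ d + 1)
  have := Nat.choose_pos (by omega : t + 1 ≤ k + 1)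
  rw [weightC_skeleton, weightC_eq, hσt, mul_div_assoc',
    div_le_div_iff₀ (by positivity) (by positivity)]
  have hchoose := choose_mul_choose_sub (d := d) htk
  set a := cofaceCount X (d + 1) σ
  set D := (facesC X (d + 1)).card
  set K := (facesC X (k + 1)).card
  exact_mod_cast calc
    a * ((k + 1).choose (t + 1) * K)
        ≤ a * ((k + 1).choose (t + 1) * (D * (d + 1).choose (k + 1))) := by gcongr
    _ = a * (d - t).choose (k - t) * ((d + 1).choose (t + 1) * D) := by
        linear_combination a * D * hchoose.symm
    _ ≤ Q * cofaceCount X (k + 1) σ * ((d + 1).choose (t + 1) * D) := by gcongr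

theorem weightC_skeleton_le_mul_weightC (htk : t ≤ k) (hkd : k ≤ d) (hX : IsComplex X d)
    (hQ : ∀ G ∈ facesC X (k + 1), cofaceCount X (d + 1) G ≤ Q)
    (hσ : σ ∈ facesC X (t + 1)) :
    weightC (skeleton X k) k σ ≤ Q * weightC X d σ := by
  have hD := card_facesC_pos hX le_rfl
  have hK := card_facesC_pos hX (by omega : k + 1 ≤ d + 1)
  obtain ⟨-, hdown, hpure⟩ := hX
  have hσt : σ.card = t + 1 := (mem_filter.mp hσ).2
  have hglobal :
      (facesC X (d + 1)).card * (d + 1).choose (k + 1) ≤ Q * (facesC X (k + 1)).card := by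
    simpa [cofaceCount_empty] using mul_choose_le_mul_cofaceCount (σ := ∅) hdown hQ (by simp)
  have hlocal :
      cofaceCount X (k + 1) σ ≤ cofaceCount X (d + 1) σ * (d - t).choose (k - t) := by
    simpa [hσt] using cofaceCount_le_mul_choose hdown hpure (by omega : σ.card ≤ k + 1)
  have := Nat.choose_pos (by omega : t + 1 ≤ d + 1)
  have := Nat.choose_pos (by omega : t + 1 ≤ k + 1)
  rw [weightC_skeleton, weightC_eq, hσt, mul_div_assoc',
    div_le_div_iff₀ (by positivity) (by positivity)]
  have hchoose := choose_mul_choose_sub (d := d) htk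
  set a := cofaceCount X (d + 1) σ
  set D := (facesC X (d + 1)).card
  set K := (facesC X (k + 1)).card
  exact_mod_cast calc
    cofaceCount X (k + 1) σ * ((d + 1).choose (t + 1) * D)
        ≤ a * (d - t).choose (k - t) * ((d + 1).choose (t + 1) * D) := by gcongr
    _ = a * (k + 1).choose (t + 1) * (D * (d + 1).choose (k + 1)) := by
        linear_combination a * D * hchoose
    _ ≤ a * (k + 1).choose (t + 1) * (Q * K) := by gcongr
    _ = Q * a * ((k + 1).choose (t + 1) * K) := by ring

end Weights

theorem normC_nonneg (X : Finset (Finset ℕ)) (d : ℕ) (A : Finset (Finset ℕ)) :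
    0 ≤ normC X d A :=
  sum_nonneg fun σ _ => by rw [weightC_eq]; positivity

section Norms

variable {X : Finset (Finset ℕ)} {d t k Q : ℕ} {A : Finset (Finset ℕ)}

theorem normC_le_mul_normC_skeleton (htk : t ≤ k) (hkd : k ≤ d) (hX : IsComplex X d)
    (hQ : ∀ G ∈ facesC X (k + 1), cofaceCount X (d + 1) G ≤ Q) (hA : A ⊆ facesC X (t + 1)) :
    normC X d A ≤ Q * normC (skeleton X k) k A := by
  rw [normC, normC, mul_sum]
  exact sum_le_sum fun σ hσ => weightC_le_mul_weightC_skeleton htk hkd hX hQ (hA hσ)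

theorem normC_skeleton_le_mul_normC (htk : t ≤ k) (hkd : k ≤ d) (hX : IsComplex X d)
    (hQ : ∀ G ∈ facesC X (k + 1), cofaceCount X (d + 1) G ≤ Q) (hA : A ⊆ facesC X (t + 1)) :
    normC (skeleton X k) k A ≤ Q * normC X d A := by
  rw [normC, normC, mul_sum]
  exact sum_le_sum fun σ hσ => weightC_skeleton_le_mul_weightC htk hkd hX hQ (hA hσ)

end Norms

/-- Comparison of the norms of `X` and of its `k`-skeleton
for a complex which is `Q`-bounded at dimension `k`. -/
theorem statement_7 (d t k Q : ℕ) (htk : t ≤ k) (hkd : k ≤ d)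
    (X : Finset (Finset ℕ)) (hX : IsComplex X d)
    (hQ : ∀ σ ∈ facesC X (k + 1), ((facesC X (d + 1)).filter fun F => σ ⊆ F).card ≤ Q)
    (A : Finset (Finset ℕ)) (hA : A ⊆ facesC X (t + 1)) :
    (1 / ((Q * (d - t).choose (k - t) : ℕ) : ℝ)) * normC X d A ≤
        normC (skeleton X k) k A ∧
      normC (skeleton X k) k A ≤ ((Q * (d + 1).choose (k + 1) : ℕ) : ℝ) * normC X d A := by
  have hQ_le {c : ℕ} (hc : 0 < c) : (Q : ℝ) ≤ ((Q * c : ℕ) : ℝ) := by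
    exact_mod_cast Nat.le_mul_of_pos_right Q hc
  refine ⟨?_, ?_⟩
  · rcases Nat.eq_zero_or_pos (Q * (d - t).choose (k - t)) with h0 | hpos
    · simpa [h0] using normC_nonneg (skeleton X k) k A
    rw [one_div, inv_mul_le_iff₀ (by exact_mod_cast hpos)]
    calc normC X d A
        ≤ Q * normC (skeleton X k) k A := normC_le_mul_normC_skeleton htk hkd hX hQ hA
      _ ≤ _ := mul_le_mul_of_nonneg_right (hQ_le (Nat.choose_pos (by omega))) (normC_nonneg ..)
  · calc normC (skeleton X k) k A
        ≤ Q * normC X d A := normC_skeleton_le_mul_normC htk hkd hX hQ hA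
      _ ≤ _ := mul_le_mul_of_nonneg_right (hQ_le (Nat.choose_pos (by omega))) (normC_nonneg ..)
end HDExpansion
end
end

section
/- Let X be a d-complex, 0 ≤ k ≤ d, and let A ⊆ X(k) be a minimal k-cochain. Then every subset A' ⊆ A is also a minimal k-cochain. -/
open Finset
open scoped symmDiff

noncomputable section

namespace HDExpansion

lemma weightC_nonneg (X : Finset (Finset ℕ)) (d : ℕ) (σ : Finset ℕ) :
    0 ≤ weightC X d σ := by
  unfold weightC
  positivity

lemma normC_mono (X : Finset (Finset ℕ)) (d : ℕ) {A B : Finset (Finset ℕ)} (h : A ⊆ B) :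
    normC X d A ≤ normC X d B :=
  Finset.sum_le_sum_of_subset_of_nonneg h (fun σ _ _ => weightC_nonneg X d σ)

lemma normC_split (X : Finset (Finset ℕ)) (d : ℕ) (A b : Finset (Finset ℕ)) :
    normC X d A = normC X d (A \ b) + normC X d (A ∩ b) := by
  unfold normC
  rw [← Finset.sum_union (Finset.disjoint_sdiff_inter A b), Finset.sdiff_union_inter]

lemma normC_symmDiff (X : Finset (Finset ℕ)) (d : ℕ) (A b : Finset (Finset ℕ)) :
    normC X d (A ∆ b) = normC X d (A \ b) + normC X d (b \ A) := by
  unfold normC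
  rw [symmDiff_def, Finset.sup_eq_union, Finset.sum_union]
  exact disjoint_sdiff_sdiff

/-- A subset of a minimal cochain is minimal. -/
theorem statement_9 (d k : ℕ) (hk : k ≤ d) (X : Finset (Finset ℕ)) (hX : IsComplex X d)
    (A : Finset (Finset ℕ)) (hA : A ⊆ facesC X (k + 1))
    (hmin : IsMinimal X d (k + 1) A)
    (A' : Finset (Finset ℕ)) (hA' : A' ⊆ A) :
    IsMinimal X d (k + 1) A' := by
  intro b hb
  have hAb := hmin b hb
  rw [normC_split X d A b, normC_symmDiff X d A b] at hAb
  have key : normC X d (A ∩ b) ≤ normC X d (b \ A) := by linarith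
  rw [normC_split X d A' b, normC_symmDiff X d A' b]
  have h1 : normC X d (A' ∩ b) ≤ normC X d (A ∩ b) :=
    normC_mono X d (Finset.inter_subset_inter_right hA')
  have h2 : normC X d (b \ A) ≤ normC X d (b \ A') :=
    normC_mono X d (Finset.sdiff_subset_sdiff (le_refl b) hA')
  linarith


end HDExpansion
end
end
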